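/- arXiv:1405.2939 — 2 statements merged into one kernel-verified Lean document; each statement's English description precedes it below -/
import Mathlib

section
/- Let X be an abelian Polish group and let A ⊆ X be a universally measurable set with the property that for every compact set K ⊆ X there exists x_K ∈ X with K + x_K ⊆ A. Then A is not Haar null. -/
open MeasureTheory

/-- A set is *universally measurable* if it is measurable with respect to the completion of
every Borel probability measure. -/
def UnivMeasurable {X : Type*} [TopologicalSpace X] (B : Set X) : Prop :=
  ∀ μ : @Measure X (borel X), @IsProbabilityMeasure X (borel X) μ →
    @NullMeasurableSet X (borel X) B μ

/-- A set `A` is *Haar null* if there are a Borel probability measure `μ` and a universally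
measurable set `B ⊇ A` with `μ (B + x) = 0` for every `x`. -/
def IsHaarNull {X : Type*} [TopologicalSpace X] [AddCommGroup X] (A : Set X) : Prop :=
  ∃ μ : @Measure X (borel X), @IsProbabilityMeasure X (borel X) μ ∧
    ∃ B : Set X, A ⊆ B ∧ UnivMeasurable B ∧ ∀ x : X, μ ((· + x) '' B) = 0

/-!
By Ulam's theorem a Borel probability measure `μ` on a Polish space charges some compact set `K`.
If `K + x ⊆ A ⊆ B`, then `K ⊆ B - x`, so `μ (B - x) > 0` and `B` cannot witness that `A` is
Haar null.
-/

lemma exists_isCompact_measure_pos {X : Type*} [TopologicalSpace X] [MeasurableSpace X]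
    (μ : Measure X) [μ.InnerRegular] [NeZero μ] :
    ∃ K, IsCompact K ∧ 0 < μ K := by
  obtain ⟨K, -, hK, hμK⟩ :=
    MeasurableSet.univ.exists_lt_isCompact (μ := μ) (Measure.measure_univ_pos.mpr (NeZero.ne μ))
  exact ⟨K, hK, hμK⟩

lemma subset_image_add_neg_of_image_add_subset {X : Type*} [AddGroup X] {K B : Set X} {x : X}
    (h : (· + x) '' K ⊆ B) : K ⊆ (· + -x) '' B := by
  rwa [Set.image_add_right, neg_neg, ← Set.image_subset_iff]

theorem not_haarNull_of_compact_translates_general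
    {X : Type*} [TopologicalSpace X] [PolishSpace X] [AddCommGroup X]
    (A : Set X)
    (h : ∀ K : Set X, IsCompact K → ∃ x : X, (· + x) '' K ⊆ A) :
    ¬ IsHaarNull A := by
  rintro ⟨μ, hμ, B, hAB, -, hB⟩
  let _ : MeasurableSpace X := borel X
  have : BorelSpace X := ⟨rfl⟩
  obtain ⟨K, hK, hμK⟩ := exists_isCompact_measure_pos μ
  obtain ⟨x, hx⟩ := h K hK
  have hKB : K ⊆ (· + -x) '' B := subset_image_add_neg_of_image_add_subset (hx.trans hAB)
  exact hμK.ne' (measure_mono_null hKB (hB (-x)))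

theorem not_haarNull_of_compact_translates
    {X : Type*} [TopologicalSpace X] [PolishSpace X] [AddCommGroup X] [IsTopologicalAddGroup X]
    (A : Set X) (hA : UnivMeasurable A)
    (h : ∀ K : Set X, IsCompact K → ∃ x : X, (· + x) '' K ⊆ A) :
    ¬ IsHaarNull A :=
  not_haarNull_of_compact_translates_general A h
end

section
/- Let A = {(xₙ)ₙ ∈ c₀ : xₙ ≥ 0 for all n} be the nonnegative cone in the Banach space c₀ of real sequences converging to 0. Then for every compact set K ⊆ c₀ there exists y ∈ c₀ such that K + y ⊆ A. -/
/-!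
A compact set `K ⊆ c₀` is totally bounded, hence vanishes at infinity uniformly (compare with a
finite `ε / 2`-net). So `y n := sup_{f ∈ K} |f n|` again tends to `0`, and `f + y ≥ 0` for `f ∈ K`.
-/

open ZeroAtInfty Filter Topology

namespace ZeroAtInftyContinuousMap

variable {α β : Type*} [TopologicalSpace α]

lemma norm_apply_le [SeminormedAddCommGroup β] (f : C₀(α, β)) (x : α) : ‖f x‖ ≤ ‖f‖ :=
  f.toBCF.norm_coe_le_norm x

lemma eventually_forall_norm_lt_of_totallyBounded [SeminormedAddCommGroup β]
    {K : Set C₀(α, β)} (hK : TotallyBounded K) {ε : ℝ} (hε : 0 < ε) :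
    ∀ᶠ x in cocompact α, ∀ f ∈ K, ‖f x‖ < ε := by
  obtain ⟨t, ht, hKt⟩ := Metric.totallyBounded_iff.mp hK (ε / 2) (half_pos hε)
  have hnet : ∀ᶠ x in cocompact α, ∀ u ∈ t, ‖u x‖ < ε / 2 :=
    (eventually_all_finite ht).mpr fun u _ =>
      (tendsto_zero_iff_norm_tendsto_zero.mp (zero_at_infty u)).eventually_lt_const (half_pos hε)
  filter_upwards [hnet] with x hx f hf
  obtain ⟨u, hu, hfu⟩ := Set.mem_iUnion₂.mp (hKt hf)
  calc ‖f x‖ ≤ ‖(f - u) x‖ + ‖u x‖ := by simpa using norm_le_norm_sub_add (f x) (u x)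
    _ ≤ dist f u + ‖u x‖ := by grw [norm_apply_le, ← dist_eq_norm]
    _ < ε / 2 + ε / 2 := add_lt_add (Metric.mem_ball.mp hfu) (hx u hu)
    _ = ε := add_halves ε

lemma tendsto_sSup_norm_image_of_totallyBounded [SeminormedAddCommGroup β]
    {K : Set C₀(α, β)} (hK : TotallyBounded K) :
    Tendsto (fun x => sSup ((fun f : C₀(α, β) => ‖f x‖) '' K)) (cocompact α) (𝓝 0) := by
  refine Metric.tendsto_nhds.mpr fun ε hε => ?_
  filter_upwards [eventually_forall_norm_lt_of_totallyBounded hK (half_pos hε)] with x hx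
  have hsup_nonneg : 0 ≤ sSup ((fun f : C₀(α, β) => ‖f x‖) '' K) :=
    Real.sSup_nonneg (by rintro _ ⟨f, -, rfl⟩; exact norm_nonneg _)
  have hsup_le : sSup ((fun f : C₀(α, β) => ‖f x‖) '' K) ≤ ε / 2 :=
    Real.sSup_le (by rintro _ ⟨f, hf, rfl⟩; exact (hx f hf).le) (half_pos hε).le
  rw [Real.dist_0_eq_abs, abs_of_nonneg hsup_nonneg]
  exact hsup_le.trans_lt (half_lt_self hε)

lemma exists_forall_norm_le_of_isCompact [DiscreteTopology α] [SeminormedAddCommGroup β]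
    {K : Set C₀(α, β)} (hK : IsCompact K) :
    ∃ g : C₀(α, ℝ), ∀ f ∈ K, ∀ x, ‖f x‖ ≤ g x := by
  obtain ⟨R, hR⟩ := (isBounded_iff_forall_norm_le.mp hK.isBounded)
  refine ⟨⟨⟨_, continuous_of_discreteTopology⟩,
    tendsto_sSup_norm_image_of_totallyBounded hK.totallyBounded⟩, fun f hf x => ?_⟩
  refine le_csSup ⟨R, ?_⟩ ⟨f, hf, rfl⟩
  rintro _ ⟨f', hf', rfl⟩
  exact (norm_apply_le f' x).trans (hR f' hf')

end ZeroAtInftyContinuousMap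

theorem compact_translates_into_nonneg_cone
    (K : Set C₀(ℕ, ℝ)) (hK : IsCompact K) :
    ∃ y : C₀(ℕ, ℝ), (· + y) '' K ⊆ {f : C₀(ℕ, ℝ) | ∀ n : ℕ, 0 ≤ f n} := by
  obtain ⟨y, hy⟩ := ZeroAtInftyContinuousMap.exists_forall_norm_le_of_isCompact hK
  refine ⟨y, ?_⟩
  rintro _ ⟨f, hf, rfl⟩ n
  have hfy : |f n| ≤ y n := hy f hf n
  show 0 ≤ f n + y n
  linarith [neg_abs_le (f n)]
end
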